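/- arXiv:1911.00260 — 3 statements merged into one kernel-verified Lean document; each statement's English description precedes it below -/
import Mathlib

section
/- A weakly chained diagonally dominant matrix is invertible. That is, if A is an n×n real matrix such that every row i satisfies |A_{ii}| ≥ ∑_{j≠i} |A_{ij}|, and for every row i there is a path i = k_0, k_1, ..., k_m in the directed graph of A (edges (p,q) whenever A_{pq} ≠ 0) ending at a row k_m that is strictly diagonally dominant (|A_{k_m k_m}| > ∑_{j≠k_m} |A_{k_m j}|), then det A ≠ 0. -/
/-!
Suppose `A *ᵥ x = 0` with `x ≠ 0`, and call an index maximal when `|x i|` is largest.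
At a maximal row, `|A i i| |x i| = |∑_{j ≠ i} A i j x j| ≤ ∑_{j ≠ i} |A i j| |x i|`, so the row
cannot be strictly dominant, and if it is weakly dominant every inequality is an equality,
which forces `|x j| = |x i|` whenever `A i j ≠ 0`. Hence maximality propagates along the
directed graph of `A`, and the chain from a maximal row reaches a strictly dominant row that
is still maximal: a contradiction.
-/

open Finset

namespace Matrix

variable {ι R : Type*} [Field R] [LinearOrder R] [IsStrictOrderedRing R]
  {A : Matrix ι ι R} {x : ι → R}

theorem sum_abs_mul_le_of_abs_le (i : ι) (hmax : ∀ j, |x j| ≤ |x i|) (s : Finset ι) :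
    ∑ j ∈ s, |A i j| * |x j| ≤ (∑ j ∈ s, |A i j|) * |x i| := by
  rw [sum_mul]
  exact sum_le_sum fun j _ => mul_le_mul_of_nonneg_left (hmax j) (abs_nonneg _)

variable [Fintype ι] [DecidableEq ι]

theorem abs_diag_mul_le_of_mulVec_eq_zero (hAx : A *ᵥ x = 0) (i : ι) :
    |A i i| * |x i| ≤ ∑ j ∈ univ.erase i, |A i j| * |x j| := by
  have hrow : A i i * x i + ∑ j ∈ univ.erase i, A i j * x j = 0 := by
    rw [add_sum_erase _ (fun j => A i j * x j) (mem_univ i)]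
    exact congrFun hAx i
  calc |A i i| * |x i| = |∑ j ∈ univ.erase i, A i j * x j| := by
        rw [← abs_mul, eq_neg_of_add_eq_zero_left hrow, abs_neg]
    _ ≤ ∑ j ∈ univ.erase i, |A i j * x j| := abs_sum_le_sum_abs _ _
    _ = ∑ j ∈ univ.erase i, |A i j| * |x j| := by simp only [abs_mul]

theorem abs_diag_le_sum_abs_of_mulVec_eq_zero (hAx : A *ᵥ x = 0) {i : ι}
    (hmax : ∀ j, |x j| ≤ |x i|) (hxi : x i ≠ 0) :
    |A i i| ≤ ∑ j ∈ univ.erase i, |A i j| :=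
  le_of_mul_le_mul_right
    ((abs_diag_mul_le_of_mulVec_eq_zero hAx i).trans (sum_abs_mul_le_of_abs_le i hmax _))
    (abs_pos.mpr hxi)

theorem abs_eq_of_mulVec_eq_zero_of_ne_zero (hAx : A *ᵥ x = 0) {i j : ι}
    (hmax : ∀ j, |x j| ≤ |x i|) (hdd : ∑ j ∈ univ.erase i, |A i j| ≤ |A i i|)
    (hij : A i j ≠ 0) : |x j| = |x i| := by
  rcases eq_or_ne j i with rfl | hji
  · rfl
  have hle : ∀ p ∈ univ.erase i, |A i p| * |x p| ≤ |A i p| * |x i| :=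
    fun p _ => mul_le_mul_of_nonneg_left (hmax p) (abs_nonneg _)
  have hsum : ∑ p ∈ univ.erase i, |A i p| * |x p| = ∑ p ∈ univ.erase i, |A i p| * |x i| := by
    refine le_antisymm (sum_le_sum hle) ?_
    calc ∑ p ∈ univ.erase i, |A i p| * |x i| = (∑ p ∈ univ.erase i, |A i p|) * |x i| :=
          (sum_mul _ _ _).symm
      _ ≤ |A i i| * |x i| := mul_le_mul_of_nonneg_right hdd (abs_nonneg _)
      _ ≤ ∑ p ∈ univ.erase i, |A i p| * |x p| := abs_diag_mul_le_of_mulVec_eq_zero hAx i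
  exact mul_left_cancel₀ (abs_ne_zero.mpr hij)
    ((sum_eq_sum_iff_of_le hle).mp hsum j (mem_erase.mpr ⟨hji, mem_univ j⟩))

theorem abs_eq_of_reflTransGen_of_mulVec_eq_zero (hAx : A *ᵥ x = 0)
    (hdd : ∀ i, ∑ j ∈ univ.erase i, |A i j| ≤ |A i i|) {i k : ι}
    (hmax : ∀ j, |x j| ≤ |x i|) (hpath : Relation.ReflTransGen (fun p q => A p q ≠ 0) i k) :
    |x k| = |x i| := by
  induction hpath with
  | refl => rfl
  | tail _ hedge ih =>
    rw [← ih] at hmax ⊢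
    exact abs_eq_of_mulVec_eq_zero_of_ne_zero hAx hmax (hdd _) hedge

theorem det_ne_zero_of_weakly_chained_diagonally_dominant
    (hdd : ∀ i, ∑ j ∈ univ.erase i, |A i j| ≤ |A i i|)
    (hchain : ∀ i, ∃ k, Relation.ReflTransGen (fun p q => A p q ≠ 0) i k ∧
      ∑ j ∈ univ.erase k, |A k j| < |A k k|) :
    A.det ≠ 0 := by
  intro hdet
  obtain ⟨x, hx, hAx⟩ := exists_mulVec_eq_zero_iff.mpr hdet
  obtain ⟨i₀, hxi₀⟩ := Function.ne_iff.mp hx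
  have : Nonempty ι := ⟨i₀⟩
  obtain ⟨i, hmax⟩ := Finite.exists_max fun j => |x j|
  have hxi : x i ≠ 0 := abs_pos.mp ((abs_pos.mpr hxi₀).trans_le (hmax i₀))
  obtain ⟨k, hpath, hstrict⟩ := hchain i
  have hk := abs_eq_of_reflTransGen_of_mulVec_eq_zero hAx hdd hmax hpath
  refine hstrict.not_ge (abs_diag_le_sum_abs_of_mulVec_eq_zero hAx (hk ▸ hmax) ?_)
  rwa [← abs_ne_zero, hk, abs_ne_zero]

end Matrix

/-- A weakly chained diagonally dominant real matrix is invertible. -/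
theorem wcdd_det_ne_zero {n : ℕ} (A : Matrix (Fin n) (Fin n) ℝ)
    (hdd : ∀ i, ∑ j ∈ Finset.univ.filter (fun j => j ≠ i), |A i j| ≤ |A i i|)
    (hchain : ∀ i, ∃ k, Relation.ReflTransGen (fun p q => A p q ≠ 0) i k ∧
      ∑ j ∈ Finset.univ.filter (fun j => j ≠ k), |A k j| < |A k k|) :
    A.det ≠ 0 := by
  simp only [filter_ne'] at hdd hchain
  exact Matrix.det_ne_zero_of_weakly_chained_diagonally_dominant hdd hchain
end

section
/- Let V ⊆ ℤ^d be finite and symmetric with respect to the origin, h > 0, and v defined at x and x ± h e for e ∈ V. If the Lebesgue measure of ∂_V v(x) = {p : p · (h e) ≥ v(x) − v(x − h e) ∀ e ∈ V} is positive, then Δ_{h e} v(x) = v(x+he) − 2v(x) + v(x−he) > 0 for every e ∈ V. -/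
open scoped RealInnerProductSpace
open MeasureTheory

/-- Embedding of integer vectors into Euclidean space. -/
noncomputable def embZ {d : ℕ} (e : Fin d → ℤ) : EuclideanSpace ℝ (Fin d) :=
  WithLp.toLp 2 (fun i => (e i : ℝ))

/-- The discrete subdifferential `∂_V v(x)`. -/
def discreteSubdiff {d : ℕ} (V : Finset (Fin d → ℤ)) (h : ℝ)
    (v : EuclideanSpace ℝ (Fin d) → ℝ) (x : EuclideanSpace ℝ (Fin d)) :
    Set (EuclideanSpace ℝ (Fin d)) :=
  {p | ∀ e ∈ V, v x - v (x - h • embZ e) ≤ ⟪p, h • embZ e⟫}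

/-!
For `e, -e ∈ V`, every `p ∈ ∂_V v(x)` satisfies
`v(x) - v(x - h e) ≤ ⟪p, h e⟫ ≤ v(x + h e) - v(x)`.
If the second difference `Δ_{h e} v(x)` were `≤ 0`, these bounds would force equality, so
`∂_V v(x)` would lie in a hyperplane orthogonal to `h e ≠ 0`, a Lebesgue-null set.
-/

theorem MeasureTheory.Measure.addHaar_preimage_singleton_of_ne_zero {E : Type*}
    [NormedAddCommGroup E] [NormedSpace ℝ E] [MeasurableSpace E] [BorelSpace E]
    [FiniteDimensional ℝ E] (μ : Measure E) [μ.IsAddHaarMeasure]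
    {f : E →ₗ[ℝ] ℝ} (hf : f ≠ 0) (c : ℝ) :
    μ (f ⁻¹' {c}) = 0 := by
  obtain ⟨x₀, rfl⟩ := LinearMap.surjective_of_ne_zero hf c
  have hlevel : f ⁻¹' {f x₀} = (fun y => y + -x₀) ⁻¹' (LinearMap.ker f) := by
    ext y
    simp [← sub_eq_add_neg, sub_eq_zero]
  rw [hlevel, measure_preimage_add_right]
  exact Measure.addHaar_submodule μ _ (mt LinearMap.ker_eq_top.mp hf)

theorem MeasureTheory.Measure.addHaar_setOf_inner_eq {E : Type*}
    [NormedAddCommGroup E] [InnerProductSpace ℝ E] [MeasurableSpace E] [BorelSpace E]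
    [FiniteDimensional ℝ E] (μ : Measure E) [μ.IsAddHaarMeasure]
    {a : E} (ha : a ≠ 0) (c : ℝ) :
    μ {p | ⟪p, a⟫ = c} = 0 := by
  have hf : innerₛₗ ℝ a ≠ 0 := fun h0 => ha (by simpa using LinearMap.congr_fun h0 a)
  have hlevel : {p | ⟪p, a⟫ = c} = innerₛₗ ℝ a ⁻¹' {c} := by
    ext p
    simp [real_inner_comm a]
  rw [hlevel]
  exact Measure.addHaar_preimage_singleton_of_ne_zero μ hf c

theorem embZ_neg {d : ℕ} (e : Fin d → ℤ) : embZ (-e) = -embZ e := by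
  ext i
  simp [embZ]

theorem embZ_eq_zero_iff {d : ℕ} {e : Fin d → ℤ} : embZ e = 0 ↔ e = 0 := by
  constructor
  · intro he
    funext i
    simpa [embZ] using congrArg (fun y => y i) he
  · rintro rfl
    ext i
    simp [embZ]

section DiscreteSubdiff

variable {d : ℕ} {V : Finset (Fin d → ℤ)} {h : ℝ} {v : EuclideanSpace ℝ (Fin d) → ℝ}
  {x p : EuclideanSpace ℝ (Fin d)} {e : Fin d → ℤ}

theorem inner_le_of_mem_discreteSubdiff_of_neg_mem (hp : p ∈ discreteSubdiff V h v x)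
    (he : -e ∈ V) : ⟪p, h • embZ e⟫ ≤ v (x + h • embZ e) - v x := by
  have hneg := hp (-e) he
  rw [embZ_neg, smul_neg, sub_neg_eq_add, inner_neg_right] at hneg
  linarith

theorem discreteSubdiff_subset_setOf_inner_eq (he : e ∈ V) (hne : -e ∈ V)
    (hdiff : v (x + h • embZ e) - 2 * v x + v (x - h • embZ e) ≤ 0) :
    discreteSubdiff V h v x ⊆ {p | ⟪p, h • embZ e⟫ = v x - v (x - h • embZ e)} :=
  fun p hp =>
    le_antisymm (by linarith [inner_le_of_mem_discreteSubdiff_of_neg_mem hp hne]) (hp e he)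

end DiscreteSubdiff

/-- If the discrete subdifferential has positive Lebesgue measure then all second
differences are strictly positive. -/
theorem second_diff_pos_of_subdiff_pos_measure {d : ℕ}
    (V : Finset (Fin d → ℤ)) (h0 : (0 : Fin d → ℤ) ∉ V)
    (hsym : ∀ e ∈ V, -e ∈ V)
    (h : ℝ) (hh : 0 < h)
    (v : EuclideanSpace ℝ (Fin d) → ℝ) (x : EuclideanSpace ℝ (Fin d))
    (hpos : 0 < volume (discreteSubdiff V h v x)) :
    ∀ e ∈ V, 0 < v (x + h • embZ e) - 2 * v x + v (x - h • embZ e) := by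
  intro e he
  by_contra! hdiff
  have hstep : h • embZ e ≠ 0 :=
    smul_ne_zero hh.ne' (mt embZ_eq_zero_iff.mp (ne_of_mem_of_not_mem he h0))
  have hnull : volume (discreteSubdiff V h v x) = 0 :=
    measure_mono_null (discreteSubdiff_subset_setOf_inner_eq he (hsym e he) hdiff)
      (Measure.addHaar_setOf_inner_eq volume hstep _)
  exact hpos.ne' hnull
end

section
/- Let A be an M×M real matrix with the property that for every row i either (a) |A_{ii}| = ∑_{j ≠ i} |A_{ij}| + s_i with s_i ≥ 0, and (b) there exists a nonempty set I of rows with s_i > 0 for i ∈ I, such that from every row there is a directed path (through nonzero entries) to a row in I. Then A x = 0 implies x = 0. -/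
/-- A weakly chained diagonally dominant matrix has trivial kernel. -/
theorem wcdd_kernel_trivial {M : ℕ} (A : Matrix (Fin M) (Fin M) ℝ)
    (hdd : ∀ i, ∑ j ∈ Finset.univ.filter (fun j => j ≠ i), |A i j| ≤ |A i i|)
    (hIne : ∃ i, ∑ j ∈ Finset.univ.filter (fun j => j ≠ i), |A i j| < |A i i|)
    (hreach : ∀ i, ∃ k, Relation.ReflTransGen (fun p q => A p q ≠ 0) i k ∧
      ∑ j ∈ Finset.univ.filter (fun j => j ≠ k), |A k j| < |A k k|)
    (x : Fin M → ℝ) (hx : A.mulVec x = 0) :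
    x = 0 := by
  by_contra hx0
  obtain ⟨j0, hj0⟩ : ∃ j, x j ≠ 0 := Function.ne_iff.mp hx0
  have hne : Finset.univ.Nonempty (α := Fin M) := ⟨j0, Finset.mem_univ _⟩
  obtain ⟨i0, -, hmax⟩ := Finset.exists_max_image Finset.univ (fun i => |x i|) hne
  set m : ℝ := |x i0| with hm
  have hmax' : ∀ j, |x j| ≤ m := fun j => hmax j (Finset.mem_univ _)
  have hmpos : 0 < m := lt_of_lt_of_le (abs_pos.mpr hj0) (hmax' j0)
  -- the key chain of inequalities for any row i with |x i| = m
  have chain : ∀ i, |x i| = m →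
      |A i i| * m ≤ ∑ j ∈ Finset.univ.erase i, |A i j| * |x j| ∧
      ∑ j ∈ Finset.univ.erase i, |A i j| * |x j| ≤
        (∑ j ∈ Finset.univ.filter (fun j => j ≠ i), |A i j|) * m := by
    intro i hi
    have hrow : ∑ j, A i j * x j = 0 := by
      have := congrFun hx i
      simpa [Matrix.mulVec, dotProduct] using this
    have hsplit : A i i * x i + ∑ j ∈ Finset.univ.erase i, A i j * x j
        = ∑ j, A i j * x j := Finset.add_sum_erase _ (fun j => A i j * x j) (Finset.mem_univ i)
    have hdiag : A i i * x i = -∑ j ∈ Finset.univ.erase i, A i j * x j := by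
      linarith [hsplit, hrow]
    constructor
    · calc |A i i| * m = |A i i * x i| := by rw [abs_mul, hi]
        _ = |∑ j ∈ Finset.univ.erase i, A i j * x j| := by rw [hdiag, abs_neg]
        _ ≤ ∑ j ∈ Finset.univ.erase i, |A i j * x j| := Finset.abs_sum_le_sum_abs _ _
        _ = ∑ j ∈ Finset.univ.erase i, |A i j| * |x j| := by
            simp [abs_mul]
    · rw [Finset.filter_ne', Finset.sum_mul]
      refine Finset.sum_le_sum fun j _ => ?_
      exact mul_le_mul_of_nonneg_left (hmax' j) (abs_nonneg _)
  -- no row attaining the max can be strictly dominant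
  have nostrict : ∀ k, |x k| = m →
      ¬ (∑ j ∈ Finset.univ.filter (fun j => j ≠ k), |A k j| < |A k k|) := by
    intro k hk hstrict
    obtain ⟨h1, h2⟩ := chain k hk
    have := mul_lt_mul_of_pos_right hstrict hmpos
    linarith
  -- if |x i| = m and A i j ≠ 0 then |x j| = m
  have prop : ∀ i, |x i| = m → ∀ j, A i j ≠ 0 → |x j| = m := by
    intro i hi j hij
    rcases eq_or_ne j i with rfl | hji
    · exact hi
    obtain ⟨h1, h2⟩ := chain i hi
    have h3 : (∑ j ∈ Finset.univ.filter (fun j => j ≠ i), |A i j|) * m ≤ |A i i| * m :=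
      mul_le_mul_of_nonneg_right (hdd i) hmpos.le
    have heq : ∑ j ∈ Finset.univ.erase i, |A i j| * |x j|
        = ∑ j ∈ Finset.univ.erase i, |A i j| * m := by
      rw [show (∑ j ∈ Finset.univ.erase i, |A i j| * m)
          = (∑ j ∈ Finset.univ.filter (fun j => j ≠ i), |A i j|) * m by
        rw [Finset.filter_ne', Finset.sum_mul]]
      linarith
    have hzero : ∀ j ∈ Finset.univ.erase i, |A i j| * m - |A i j| * |x j| = 0 := by
      have hsum : ∑ j ∈ Finset.univ.erase i, (|A i j| * m - |A i j| * |x j|) = 0 := by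
        rw [Finset.sum_sub_distrib, heq, sub_self]
      refine (Finset.sum_eq_zero_iff_of_nonneg fun j _ => ?_).mp hsum
      have := mul_le_mul_of_nonneg_left (hmax' j) (abs_nonneg (A i j))
      linarith
    have hj := hzero j (Finset.mem_erase.mpr ⟨hji, Finset.mem_univ _⟩)
    have habs : 0 < |A i j| := abs_pos.mpr hij
    nlinarith
  -- propagate along reflexive transitive closure
  have prop' : ∀ i k, Relation.ReflTransGen (fun p q => A p q ≠ 0) i k →
      |x i| = m → |x k| = m := by
    intro i k h hi
    induction h with
    | refl => exact hi
    | tail _ hbc ih => exact prop _ ih _ hbc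
  obtain ⟨k, hk, hkstrict⟩ := hreach i0
  exact nostrict k (prop' i0 k hk rfl) hkstrict
end
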